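/- Let φ be a restricted 3-SAT formula (every clause has 2 or 3 literals, every variable occurs at most twice unnegated and at most twice negated) with ℓ ≥ 1 variables and k ≥ 1 clauses, and let p ∈ (0,1). Then every pure Bayesian Nash equilibrium σ of the malicious Bayesian congestion game Γ_a(φ,p) satisfies the following two structural properties: (I) σ(u^m) = {e_0} for every player u other than u_1, and u_0 is the only player with σ(u^s) = {e_0}; (II) σ(u_2^s) = {e_4}, and no other type-agent is assigned to e_4 (that is, σ(u^s) ≠ {e_4} for every player u ≠ u_2 and σ(u^m) ≠ {e_4} for every player u). -/
import Mathlib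


open Finset

/-- The data of a malicious Bayesian congestion game: strategy sets (sets of
nonempty subsets of resources), type probabilities, latency functions. -/
structure Game (N E : Type) where
  S : N → Finset (Finset E)
  p : N → ℝ
  f : E → ℝ → ℝ

namespace Game

variable {N E : Type} [Fintype N] [DecidableEq N] [Fintype E] [DecidableEq E]

/-- A pure strategy profile: each player chooses a pair (selfish strategy, malicious strategy). -/
abbrev Profile (N E : Type) := N → Finset E × Finset E

/-- Validity: both type-agents of each player choose strategies from the player's strategy set. -/
def Valid (G : Game N E) (σ : Profile N E) : Prop :=
  ∀ u, (σ u).1 ∈ G.S u ∧ (σ u).2 ∈ G.S u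

/-- Expected selfish load on resource `e`, with player `u` omitted. -/
noncomputable def selfLoadEx (G : Game N E) (σ : Profile N E) (u : N) (e : E) : ℝ :=
  ∑ v ∈ Finset.univ.erase u, if e ∈ (σ v).1 then 1 - G.p v else 0

/-- Expected malicious load on resource `e`, with player `u` omitted. -/
noncomputable def malLoadEx (G : Game N E) (σ : Profile N E) (u : N) (e : E) : ℝ :=
  ∑ v ∈ Finset.univ.erase u, if e ∈ (σ v).2 then G.p v else 0

/-- Private (expected) cost of player `u` in the pure profile `σ`. -/
noncomputable def PC (G : Game N E) (σ : Profile N E) (u : N) : ℝ :=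
  ∑ e ∈ (σ u).1, G.f e (G.selfLoadEx σ u e + G.malLoadEx σ u e + 1)

/-- Social cost of a pure profile: weighted average latency of the selfish type-agents. -/
noncomputable def SC (G : Game N E) (σ : Profile N E) : ℝ :=
  (∑ u, (1 - G.p u) * G.PC σ u) / ((Fintype.card N : ℝ) - ∑ u, G.p u)

/-- Replace the selfish strategy of player `u` by `t`. -/
def updS (σ : Profile N E) (u : N) (t : Finset E) : Profile N E :=
  Function.update σ u (t, (σ u).2)

/-- Replace the malicious strategy of player `u` by `t`. -/
def updM (σ : Profile N E) (u : N) (t : Finset E) : Profile N E :=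
  Function.update σ u ((σ u).1, t)

/-- Pure Bayesian Nash equilibrium: no selfish type-agent can decrease its private cost and
no malicious type-agent can increase the social cost by a unilateral deviation. -/
def IsPureBNE (G : Game N E) (σ : Profile N E) : Prop :=
  G.Valid σ ∧ ∀ u : N, ∀ t ∈ G.S u,
    G.PC σ u ≤ G.PC (updS σ u t) u ∧ G.SC (updM σ u t) ≤ G.SC σ

end Game
/-- A CNF formula with `l` variables and `k` clauses. A literal is a pair `(x, b)`
where `b = true` means the variable `x` occurs unnegated and `b = false` negated. -/
structure Formula (l k : ℕ) where
  C : Fin k → Finset (Fin l × Bool)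

/-- Restricted 3-SAT: every clause has 2 or 3 literals and every variable occurs
at most twice unnegated and at most twice negated. -/
def Formula.Restricted {l k : ℕ} (φ : Formula l k) : Prop :=
  (∀ j, (φ.C j).card = 2 ∨ (φ.C j).card = 3) ∧
  ∀ (x : Fin l) (b : Bool), (Finset.univ.filter fun j => (x, b) ∈ φ.C j).card ≤ 2

/-- Satisfiability of the formula. -/
def Formula.Satisfiable {l k : ℕ} (φ : Formula l k) : Prop :=
  ∃ v : Fin l → Bool, ∀ j, ∃ lit ∈ φ.C j, v lit.1 = lit.2
/-- Resources of the game `Γ_a(φ,p)`: `e0,…,e4` together with `e_x^0` (`ev x false`)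
and `e_x^1` (`ev x true`) for each variable `x`. -/
inductive ResA (l : ℕ) where
  | e0 | e1 | e2 | e3 | e4
  | ev (x : Fin l) (b : Bool)
deriving DecidableEq, Fintype

/-- Players of the game `Γ_a(φ,p)`. -/
inductive PlA (l k : ℕ) where
  | u0 | u1 | u2
  | uvar (x : Fin l)
  | ucl (j : Fin k)
deriving DecidableEq, Fintype

/-- The malicious Bayesian congestion game `Γ_a(φ,p)` from part (a) of the reduction. -/
noncomputable def GammaA {l k : ℕ} (φ : Formula l k) (p : ℝ) : Game (PlA l k) (ResA l) where
  S := fun u => match u with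
    | .u0 => {{ResA.e0}}
    | .u1 => {{ResA.e1}, {ResA.e2}, {ResA.e3}}
    | .u2 => {{ResA.e0}, {ResA.e1}, {ResA.e2}, {ResA.e3}, {ResA.e4}}
    | .uvar x => {{ResA.e0}, {ResA.e4}, {ResA.ev x false}, {ResA.ev x true}}
    | .ucl j => insert {ResA.e0} ((φ.C j).image fun lit => {ResA.ev lit.1 lit.2})
  p := fun _ => p
  f := fun e x => match e with
    | .e0 => ((l : ℝ) + 1) * x
    | .ev _ _ => (2 - p) * x
    | _ => x

namespace GAaux

open Finset

variable {l k : ℕ}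

/-- Option sets: the resources available to each player (all strategies are singletons). -/
def opts (φ : Formula l k) : PlA l k → Finset (ResA l)
  | .u0 => {.e0}
  | .u1 => {.e1, .e2, .e3}
  | .u2 => {.e0, .e1, .e2, .e3, .e4}
  | .uvar x => {.e0, .e4, .ev x false, .ev x true}
  | .ucl j => insert .e0 ((φ.C j).image fun lit => .ev lit.1 lit.2)

/-- Latency slopes. -/
noncomputable def slope (l : ℕ) (p : ℝ) : ResA l → ℝ
  | .e0 => (l : ℝ) + 1
  | .ev _ _ => 2 - p
  | _ => 1

lemma f_eq (φ : Formula l k) (p : ℝ) (e : ResA l) (x : ℝ) :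
    (GammaA φ p).f e x = slope l p e * x := by
  cases e <;> simp [GammaA, slope]

lemma slope_pos {p : ℝ} (hp1 : p < 1) (e : ResA l) : 0 < slope l p e := by
  cases e <;> simp [slope] <;> [positivity; linarith]

lemma mem_S_iff (φ : Formula l k) (p : ℝ) (u : PlA l k) (t : Finset (ResA l)) :
    t ∈ (GammaA φ p).S u ↔ ∃ e ∈ opts φ u, t = {e} := by
  cases u <;> simp [GammaA, opts] <;> aesop

/-- Number of players other than `u` whose `g`-choice is `e`. -/
def cntN (g : PlA l k → ResA l) (u : PlA l k) (e : ResA l) : ℕ :=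
  ((Finset.univ.erase u).filter fun v => g v = e).card

lemma sum_ite_count {α : Type*} (t : Finset α) (P : α → Prop)
    [DecidablePred P] (c : ℝ) :
    (∑ v ∈ t, if P v then c else 0) = c * (t.filter P).card := by
  rw [← Finset.sum_filter, Finset.sum_const, nsmul_eq_mul, mul_comm]

lemma cast_cnt (g : PlA l k → ResA l) (u : PlA l k) (e : ResA l) :
    ((cntN g u e : ℝ)) = ∑ v ∈ Finset.univ.erase u, if g v = e then (1 : ℝ) else 0 := by
  rw [sum_ite_count, one_mul, cntN]

lemma cntN_le {g : PlA l k → ResA l} {u e} (A : Finset (PlA l k))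
    (h : ∀ v, v ≠ u → g v = e → v ∈ A) : cntN g u e ≤ A.card := by
  apply Finset.card_le_card
  intro v hv
  simp only [Finset.mem_filter, Finset.mem_erase, Finset.mem_univ, and_true] at hv
  exact h v hv.1 hv.2

lemma one_le_cntN {g : PlA l k → ResA l} {u e} (v₀ : PlA l k) (h1 : v₀ ≠ u) (h2 : g v₀ = e) :
    1 ≤ cntN g u e :=
  Finset.card_pos.mpr ⟨v₀, by simp [Finset.mem_filter, Finset.mem_erase, h1, h2]⟩

lemma cntN_eq_zero {g : PlA l k → ResA l} {u e} (h : ∀ v, v ≠ u → g v ≠ e) :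
    cntN g u e = 0 := by
  rw [cntN, Finset.card_eq_zero, Finset.filter_eq_empty_iff]
  intro v hv
  exact h v (Finset.mem_erase.mp hv).1

lemma cntN_pair_le {g : PlA l k → ResA l} {u e e'} (hee : e ≠ e') (A : Finset (PlA l k))
    (h : ∀ v, v ≠ u → g v = e ∨ g v = e' → v ∈ A) :
    cntN g u e + cntN g u e' ≤ A.card := by
  rw [cntN, cntN, ← Finset.card_union_of_disjoint]
  · apply Finset.card_le_card
    intro v hv
    rcases Finset.mem_union.mp hv with hv | hv <;>
      simp only [Finset.mem_filter, Finset.mem_erase, Finset.mem_univ, and_true] at hv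
    · exact h v hv.1 (Or.inl hv.2)
    · exact h v hv.1 (Or.inr hv.2)
  · rw [Finset.disjoint_left]
    intro v hv hv'
    simp only [Finset.mem_filter] at hv hv'
    exact hee (hv.2 ▸ hv'.2 ▸ rfl)


lemma cntN_le_cntN_add_one {g : PlA l k → ResA l} {u w : PlA l k} {e : ResA l} :
    cntN g u e ≤ cntN g w e + 1 := by
  unfold cntN
  have hsub : (Finset.univ.erase u).filter (fun v => g v = e)
      ⊆ insert w ((Finset.univ.erase w).filter (fun v => g v = e)) := by
    intro v hv
    simp only [Finset.mem_filter, Finset.mem_erase, Finset.mem_univ, and_true] at hv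
    by_cases hvw : v = w
    · exact hvw ▸ Finset.mem_insert_self _ _
    · exact Finset.mem_insert_of_mem (Finset.mem_filter.mpr
        ⟨Finset.mem_erase.mpr ⟨hvw, Finset.mem_univ _⟩, hv.2⟩)
  calc _ ≤ _ := Finset.card_le_card hsub
    _ ≤ _ + 1 := Finset.card_insert_le _ _

-- users lemmas
lemma opts_e4 (φ : Formula l k) {v : PlA l k} (h : ResA.e4 ∈ opts φ v) :
    v = .u2 ∨ ∃ x, v = .uvar x := by
  cases v <;> simp [opts] at h ⊢

lemma opts_ev (φ : Formula l k) {v : PlA l k} {x : Fin l} {b : Bool}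
    (h : ResA.ev x b ∈ opts φ v) :
    v = .uvar x ∨ ∃ j, v = .ucl j ∧ (x, b) ∈ φ.C j := by
  cases v <;> simp [opts] at h ⊢
  · rcases h with ⟨h1, _⟩ | ⟨h1, _⟩ <;> exact h1.symm
  · exact h

lemma opts_e123 (φ : Formula l k) {v : PlA l k} {e : ResA l}
    (he : e = .e1 ∨ e = .e2 ∨ e = .e3) (h : e ∈ opts φ v) :
    v = .u1 ∨ v = .u2 := by
  cases v <;> rcases he with rfl | rfl | rfl <;> simp [opts] at h ⊢

lemma slope_e123 {p : ℝ} {e : ResA l} (he : e = .e1 ∨ e = .e2 ∨ e = .e3) :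
    slope l p e = 1 := by
  rcases he with rfl | rfl | rfl <;> rfl

lemma pigeon3 (a b : ResA l) :
    ∃ e : ResA l, (e = .e1 ∨ e = .e2 ∨ e = .e3) ∧ e ≠ a ∧ e ≠ b := by
  by_cases h1 : ResA.e1 = a ∨ ResA.e1 = b
  · by_cases h2 : ResA.e2 = a ∨ ResA.e2 = b
    · by_cases h3 : ResA.e3 = a ∨ ResA.e3 = b
      · exfalso
        rcases h1 with h1 | h1 <;> rcases h2 with h2 | h2 <;> rcases h3 with h3 | h3 <;>
          first
            | exact absurd (h1.trans h2.symm) (by simp)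
            | exact absurd (h1.trans h3.symm) (by simp)
            | exact absurd (h2.trans h3.symm) (by simp)
      · push_neg at h3
        exact ⟨.e3, by simp, fun h => h3.1 h, fun h => h3.2 h⟩
    · push_neg at h2
      exact ⟨.e2, by simp, fun h => h2.1 h, fun h => h2.2 h⟩
  · push_neg at h1
    exact ⟨.e1, by simp, fun h => h1.1 h, fun h => h1.2 h⟩


lemma PC_formula (φ : Formula l k) (p : ℝ) (s m : PlA l k → ResA l)
    (τ : Game.Profile (PlA l k) (ResA l)) (u : PlA l k) (e : ResA l)
    (h1 : (τ u).1 = {e})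
    (hoff1 : ∀ v, v ≠ u → (τ v).1 = {s v})
    (hoff2 : ∀ v, v ≠ u → (τ v).2 = {m v}) :
    (GammaA φ p).PC τ u
      = slope l p e * ((1 - p) * (cntN s u e : ℝ) + p * (cntN m u e : ℝ) + 1) := by
  have hself : (GammaA φ p).selfLoadEx τ u e = (1 - p) * (cntN s u e : ℝ) := by
    unfold Game.selfLoadEx
    have hc : ∀ v ∈ Finset.univ.erase u,
        (if e ∈ (τ v).1 then 1 - (GammaA φ p).p v else 0)
          = (if s v = e then (1 - p : ℝ) else 0) := by
      intro v hv
      have hv' : v ≠ u := (Finset.mem_erase.mp hv).1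
      rw [hoff1 v hv']
      by_cases h : s v = e
      · rw [if_pos h, if_pos (Finset.mem_singleton.mpr h.symm)]
        rfl
      · rw [if_neg h, if_neg (fun hh => h (Finset.mem_singleton.mp hh).symm)]
    rw [Finset.sum_congr rfl hc, sum_ite_count]
    rfl
  have hmal : (GammaA φ p).malLoadEx τ u e = p * (cntN m u e : ℝ) := by
    unfold Game.malLoadEx
    have hc : ∀ v ∈ Finset.univ.erase u,
        (if e ∈ (τ v).2 then (GammaA φ p).p v else 0)
          = (if m v = e then (p : ℝ) else 0) := by
      intro v hv
      have hv' : v ≠ u := (Finset.mem_erase.mp hv).1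
      rw [hoff2 v hv']
      by_cases h : m v = e
      · rw [if_pos h, if_pos (Finset.mem_singleton.mpr h.symm)]
        rfl
      · rw [if_neg h, if_neg (fun hh => h (Finset.mem_singleton.mp hh).symm)]
    rw [Finset.sum_congr rfl hc, sum_ite_count]
    rfl
  unfold Game.PC
  rw [h1, Finset.sum_singleton, f_eq, hself, hmal]

lemma cntN_congr {g g' : PlA l k → ResA l} {u e} (h : ∀ v, v ≠ u → g v = g' v) :
    cntN g u e = cntN g' u e := by
  unfold cntN
  apply Finset.card_bij (fun a _ => a) <;> intro a ha <;>
    simp only [Finset.mem_filter, Finset.mem_erase, Finset.mem_univ, and_true] at *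
  · exact ⟨ha.1, (h a ha.1).symm.trans ha.2⟩
  · exact fun b hb hab => hab
  · exact ⟨a, ⟨ha.1, (h a ha.1).trans ha.2⟩, rfl⟩

lemma derive_HS (φ : Formula l k) (p : ℝ) (σ : Game.Profile (PlA l k) (ResA l))
    (hσ : (GammaA φ p).IsPureBNE σ) (s m : PlA l k → ResA l)
    (hs : ∀ v, (σ v).1 = {s v}) (hm : ∀ v, (σ v).2 = {m v})
    (u : PlA l k) (e : ResA l) (he : e ∈ opts φ u) :
    slope l p (s u) * ((1 - p) * (cntN s u (s u) : ℝ) + p * (cntN m u (s u) : ℝ) + 1)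
      ≤ slope l p e * ((1 - p) * (cntN s u e : ℝ) + p * (cntN m u e : ℝ) + 1) := by
  have ht : ({e} : Finset (ResA l)) ∈ (GammaA φ p).S u :=
    (mem_S_iff φ p u {e}).mpr ⟨e, he, rfl⟩
  have h := (hσ.2 u {e} ht).1
  have hupd : ∀ v, v ≠ u → Game.updS σ u {e} v = σ v := by
    intro v hv
    exact Function.update_of_ne hv _ _
  rwa [PC_formula φ p s m σ u (s u) (hs u) (fun v _ => hs v) (fun v _ => hm v),
    PC_formula φ p s m (Game.updS σ u {e}) u e
      (by simp [Game.updS])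
      (fun v hv => by rw [hupd v hv]; exact hs v)
      (fun v hv => by rw [hupd v hv]; exact hm v)] at h

lemma derive_HM (φ : Formula l k) (p : ℝ) (hp0 : 0 < p) (hp1 : p < 1)
    (σ : Game.Profile (PlA l k) (ResA l))
    (hσ : (GammaA φ p).IsPureBNE σ) (s m : PlA l k → ResA l)
    (hs : ∀ v, (σ v).1 = {s v}) (hm : ∀ v, (σ v).2 = {m v})
    (u : PlA l k) (e : ResA l) (he : e ∈ opts φ u) :
    slope l p e * (cntN s u e : ℝ) ≤ slope l p (m u) * (cntN s u (m u) : ℝ) := by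
  have ht : ({e} : Finset (ResA l)) ∈ (GammaA φ p).S u :=
    (mem_S_iff φ p u {e}).mpr ⟨e, he, rfl⟩
  have h := (hσ.2 u {e} ht).2
  set τ := Game.updM σ u {e} with hτdef
  have hupd : ∀ v, v ≠ u → τ v = σ v := fun v hv => Function.update_of_ne hv _ _
  have hτ1 : ∀ v, (τ v).1 = {s v} := by
    intro v
    by_cases hv : v = u
    · subst hv; rw [hτdef]; simp [Game.updM]; exact hs v
    · rw [hupd v hv]; exact hs v
  set m' := Function.update m u e with hm'def
  have hτ2 : ∀ v, (τ v).2 = {m' v} := by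
    intro v
    by_cases hv : v = u
    · subst hv; rw [hτdef, hm'def]; simp [Game.updM]
    · rw [hupd v hv, hm'def, Function.update_of_ne hv]; exact hm v
  -- from SC inequality to sum-of-PC inequality
  have hcard : (0 : ℝ) < (Fintype.card (PlA l k) : ℝ) := by
    have : 0 < Fintype.card (PlA l k) := Fintype.card_pos_iff.mpr ⟨.u0⟩
    exact_mod_cast this
  have hden : ((Fintype.card (PlA l k) : ℝ) - ∑ v : PlA l k, (GammaA φ p).p v)
      = (Fintype.card (PlA l k) : ℝ) * (1 - p) := by
    simp only [GammaA]
    rw [Finset.sum_const, Finset.card_univ, nsmul_eq_mul]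
    ring
  have hDpos : (0 : ℝ) < (Fintype.card (PlA l k) : ℝ) * (1 - p) := by
    apply mul_pos hcard; linarith
  have hPC : ∑ v : PlA l k, (GammaA φ p).PC τ v ≤ ∑ v : PlA l k, (GammaA φ p).PC σ v := by
    unfold Game.SC at h
    rw [hden, div_le_div_iff₀ hDpos hDpos] at h
    have h2 := le_of_mul_le_mul_right h hDpos
    have h1p : (0 : ℝ) < 1 - p := by linarith
    have h3 : (1 - p) * ∑ v : PlA l k, (GammaA φ p).PC τ v
        ≤ (1 - p) * ∑ v : PlA l k, (GammaA φ p).PC σ v := by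
      rw [Finset.mul_sum, Finset.mul_sum]
      simpa only [GammaA] using h2
    exact le_of_mul_le_mul_left h3 h1p
  -- expand the sums
  have hPCτ : ∀ v, (GammaA φ p).PC τ v
      = slope l p (s v) * ((1 - p) * (cntN s v (s v) : ℝ) + p * (cntN m' v (s v) : ℝ) + 1) :=
    fun v => PC_formula φ p s m' τ v (s v) (hτ1 v) (fun w _ => hτ1 w) (fun w _ => hτ2 w)
  have hPCσ : ∀ v, (GammaA φ p).PC σ v
      = slope l p (s v) * ((1 - p) * (cntN s v (s v) : ℝ) + p * (cntN m v (s v) : ℝ) + 1) :=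
    fun v => PC_formula φ p s m σ v (s v) (hs v) (fun w _ => hs w) (fun w _ => hm w)
  have hPCu : (GammaA φ p).PC τ u = (GammaA φ p).PC σ u := by
    rw [hPCτ u, hPCσ u, cntN_congr (g := m') (g' := m) (u := u)
      (fun v hv => Function.update_of_ne hv _ _)]
  have hsplit : ∀ (F : PlA l k → ℝ),
      ∑ v : PlA l k, F v = ∑ v ∈ Finset.univ.erase u, F v + F u :=
    fun F => (Finset.sum_erase_add _ _ (Finset.mem_univ u)).symm
  rw [hsplit ((GammaA φ p).PC τ), hsplit ((GammaA φ p).PC σ), hPCu] at hPC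
  have hPCer : ∑ v ∈ Finset.univ.erase u, (GammaA φ p).PC τ v
      ≤ ∑ v ∈ Finset.univ.erase u, (GammaA φ p).PC σ v := by linarith
  -- pointwise difference
  have hkey : ∀ v, v ≠ u → (cntN m' v (s v) : ℝ)
      = (cntN m v (s v) : ℝ) + (if s v = e then 1 else 0) - (if s v = m u then 1 else 0) := by
    intro v hv
    have hmem : u ∈ Finset.univ.erase v := Finset.mem_erase.mpr ⟨fun h' => hv h'.symm, Finset.mem_univ u⟩
    rw [cast_cnt, cast_cnt, ← Finset.sum_erase_add _ _ hmem, ← Finset.sum_erase_add _ _ hmem]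
    have hcg : ∀ w ∈ (Finset.univ.erase v).erase u,
        (if m' w = s v then (1 : ℝ) else 0) = (if m w = s v then (1 : ℝ) else 0) := by
      intro w hw
      rw [hm'def, Function.update_of_ne (Finset.mem_erase.mp hw).1]
    rw [Finset.sum_congr rfl hcg]
    have h1 : m' u = e := Function.update_self _ _ _
    rw [h1]
    have he1 : (if e = s v then (1:ℝ) else 0) = (if s v = e then 1 else 0) := by
      by_cases h : s v = e
      · rw [if_pos h.symm, if_pos h]
      · rw [if_neg (fun hh => h hh.symm), if_neg h]
    have he2 : (if m u = s v then (1:ℝ) else 0) = (if s v = m u then 1 else 0) := by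
      by_cases h : s v = m u
      · rw [if_pos h.symm, if_pos h]
      · rw [if_neg (fun hh => h hh.symm), if_neg h]
    rw [he1, he2]
    ring
  have hsum_ind : ∀ r : ResA l,
      ∑ v ∈ Finset.univ.erase u, slope l p (s v) * (if s v = r then (1:ℝ) else 0)
        = slope l p r * (cntN s u r : ℝ) := by
    intro r
    have : ∀ v ∈ Finset.univ.erase u,
        slope l p (s v) * (if s v = r then (1:ℝ) else 0)
          = (if s v = r then slope l p r else 0) := by
      intro v _
      by_cases h : s v = r
      · rw [if_pos h, if_pos h, h, mul_one]
      · rw [if_neg h, if_neg h, mul_zero]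
    rw [Finset.sum_congr rfl this, sum_ite_count]
    rfl
  have hexp : ∑ v ∈ Finset.univ.erase u, (GammaA φ p).PC τ v
      = ∑ v ∈ Finset.univ.erase u, (GammaA φ p).PC σ v
        + p * (slope l p e * (cntN s u e : ℝ) - slope l p (m u) * (cntN s u (m u) : ℝ)) := by
    have : ∀ v ∈ Finset.univ.erase u, (GammaA φ p).PC τ v
        = (GammaA φ p).PC σ v
          + p * (slope l p (s v) * (if s v = e then (1:ℝ) else 0)
            - slope l p (s v) * (if s v = m u then (1:ℝ) else 0)) := by
      intro v hv
      have hv' : v ≠ u := (Finset.mem_erase.mp hv).1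
      rw [hPCτ v, hPCσ v, hkey v hv']
      ring
    rw [Finset.sum_congr rfl this, Finset.sum_add_distrib, ← Finset.mul_sum]
    have : ∑ v ∈ Finset.univ.erase u,
        (slope l p (s v) * (if s v = e then (1:ℝ) else 0)
          - slope l p (s v) * (if s v = m u then (1:ℝ) else 0))
        = slope l p e * (cntN s u e : ℝ) - slope l p (m u) * (cntN s u (m u) : ℝ) := by
      rw [Finset.sum_sub_distrib, hsum_ind e, hsum_ind (m u)]
    rw [this]
  rw [hexp] at hPCer
  nlinarith [hPCer, hp0]

lemma uvar_inj : Function.Injective (PlA.uvar : Fin l → PlA l k) := by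
  intro a b hab
  injection hab

lemma cnt_e4_le_u2 (φ : Formula l k) (g : PlA l k → ResA l)
    (hgo : ∀ v, g v ∈ opts φ v) : cntN g .u2 .e4 ≤ l := by
  have h := cntN_le (g := g) (u := .u2) (e := .e4)
      (Finset.univ.image (PlA.uvar : Fin l → PlA l k)) ?_
  · rwa [Finset.card_image_of_injective _ uvar_inj, Finset.card_univ, Fintype.card_fin] at h
  · intro v hv hveq
    rcases opts_e4 φ (hveq ▸ hgo v) with rfl | ⟨x, rfl⟩
    · exact absurd rfl hv
    · exact Finset.mem_image_of_mem _ (Finset.mem_univ x)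

lemma cnt_e4_le_var (hl : 1 ≤ l) (φ : Formula l k) (g : PlA l k → ResA l)
    (hgo : ∀ v, g v ∈ opts φ v) (x : Fin l) : cntN g (.uvar x) .e4 ≤ l := by
  set Vars := Finset.univ.image (PlA.uvar : Fin l → PlA l k) with hV
  have hmm : (PlA.uvar x : PlA l k) ∈ Vars := Finset.mem_image_of_mem _ (Finset.mem_univ x)
  have h := cntN_le (g := g) (u := .uvar x) (e := .e4)
      (insert PlA.u2 (Vars.erase (.uvar x))) ?_
  · calc cntN g (.uvar x) .e4 ≤ _ := h
      _ ≤ (Vars.erase (.uvar x)).card + 1 := Finset.card_insert_le _ _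
      _ = (l - 1) + 1 := by
          rw [Finset.card_erase_of_mem hmm, hV,
            Finset.card_image_of_injective _ uvar_inj, Finset.card_univ, Fintype.card_fin]
      _ = l := Nat.succ_pred_eq_of_pos hl
  · intro v hv hveq
    rcases opts_e4 φ (hveq ▸ hgo v) with rfl | ⟨x', rfl⟩
    · exact Finset.mem_insert_self _ _
    · exact Finset.mem_insert_of_mem
        (Finset.mem_erase.mpr ⟨hv, Finset.mem_image_of_mem _ (Finset.mem_univ x')⟩)

set_option maxHeartbeats 2000000 in
theorem structure_main (hl : 1 ≤ l) (φ : Formula l k) (hφ : φ.Restricted)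
    (p : ℝ) (hp0 : 0 < p) (hp1 : p < 1) (s m : PlA l k → ResA l)
    (hso : ∀ u, s u ∈ opts φ u) (hmo : ∀ u, m u ∈ opts φ u)
    (HS : ∀ u, ∀ e ∈ opts φ u,
      slope l p (s u) * ((1 - p) * (cntN s u (s u) : ℝ) + p * (cntN m u (s u) : ℝ) + 1)
        ≤ slope l p e * ((1 - p) * (cntN s u e : ℝ) + p * (cntN m u e : ℝ) + 1))
    (HM : ∀ u, ∀ e ∈ opts φ u,
      slope l p e * (cntN s u e : ℝ) ≤ slope l p (m u) * (cntN s u (m u) : ℝ)) :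
    (∀ u, u ≠ .u1 → m u = .e0) ∧ (∀ u, s u = .e0 ↔ u = .u0) ∧
      s .u2 = .e4 ∧ ∀ x, s (.uvar x) ≠ .e4 := by
  have hl' : (1 : ℝ) ≤ (l : ℝ) := by exact_mod_cast hl
  have hs0 : s .u0 = .e0 := by have := hso .u0; simpa [opts] using this
  have hm0 : m .u0 = .e0 := by have := hmo .u0; simpa [opts] using this
  have se0 : slope l p (.e0 : ResA l) = (l : ℝ) + 1 := rfl
  have se4 : slope l p (.e4 : ResA l) = 1 := rfl
  have h1p : (0 : ℝ) ≤ 1 - p := by linarith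
  -- generic lower bound for the cost of a non-u0 selfish agent sitting on e0
  have hLB : ∀ u : PlA l k, u ≠ .u0 → s u = .e0 →
      ((l : ℝ) + 1) * 2 ≤ slope l p (s u) *
        ((1 - p) * (cntN s u (s u) : ℝ) + p * (cntN m u (s u) : ℝ) + 1) := by
    intro u hu hsu
    have c1 : (1 : ℝ) ≤ (cntN s u .e0 : ℝ) := by
      exact_mod_cast one_le_cntN .u0 (Ne.symm hu) hs0
    have c2 : (1 : ℝ) ≤ (cntN m u .e0 : ℝ) := by
      exact_mod_cast one_le_cntN .u0 (Ne.symm hu) hm0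
    rw [hsu, se0]
    have e1 : (1 - p) * 1 ≤ (1 - p) * (cntN s u .e0 : ℝ) := by
      apply mul_le_mul_of_nonneg_left c1 h1p
    have e2 : p * 1 ≤ p * (cntN m u .e0 : ℝ) := mul_le_mul_of_nonneg_left c2 hp0.le
    have hX : (2 : ℝ) ≤ (1 - p) * (cntN s u .e0 : ℝ) + p * (cntN m u .e0 : ℝ) + 1 := by
      linarith
    have := mul_le_mul_of_nonneg_left hX (by linarith : (0 : ℝ) ≤ (l : ℝ) + 1)
    linarith
  -- Step A1 : the selfish agent of u2 is not on e0
  have hA1 : s .u2 ≠ .e0 := by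
    intro hsu
    obtain ⟨e, he123, hne1, hne2⟩ := pigeon3 (s .u1) (m .u1)
    have heo : e ∈ opts φ .u2 := by rcases he123 with rfl | rfl | rfl <;> simp [opts]
    have h := HS .u2 e heo
    have z1 : cntN s .u2 e = 0 := cntN_eq_zero (fun v hv hveq => by
      rcases opts_e123 φ he123 (hveq ▸ hso v) with rfl | rfl
      · exact hne1 hveq.symm
      · exact hv rfl)
    have z2 : cntN m .u2 e = 0 := cntN_eq_zero (fun v hv hveq => by
      rcases opts_e123 φ he123 (hveq ▸ hmo v) with rfl | rfl
      · exact hne2 hveq.symm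
      · exact hv rfl)
    rw [slope_e123 he123, z1, z2] at h
    have hlb := hLB .u2 (by simp) hsu
    push_cast at h
    linarith
  -- Step A2 : variable players' selfish agents are not on e0
  have hA2 : ∀ x, s (.uvar x) ≠ .e0 := by
    intro x hsu
    have heo : (ResA.e4 : ResA l) ∈ opts φ (.uvar x) := by simp [opts]
    have h := HS (.uvar x) .e4 heo
    have c1 : (cntN s (.uvar x) .e4 : ℝ) ≤ (l : ℝ) := by
      exact_mod_cast cnt_e4_le_var hl φ s hso x
    have c2 : (cntN m (.uvar x) .e4 : ℝ) ≤ (l : ℝ) := by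
      exact_mod_cast cnt_e4_le_var hl φ m hmo x
    rw [se4] at h
    have hlb := hLB (.uvar x) (by simp) hsu
    have e1 : (1 - p) * (cntN s (.uvar x) .e4 : ℝ) ≤ (1 - p) * (l : ℝ) :=
      mul_le_mul_of_nonneg_left c1 h1p
    have e2 : p * (cntN m (.uvar x) .e4 : ℝ) ≤ p * (l : ℝ) :=
      mul_le_mul_of_nonneg_left c2 hp0.le
    linarith
  -- Step A3 : clause players' selfish agents are not on e0
  have hA3 : ∀ j, s (.ucl j) ≠ .e0 := by
    intro j hsu
    have hlb := hLB (.ucl j) (by simp) hsu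
    by_cases hl2 : 2 ≤ l
    · -- at least 2 variables
      have hne : (φ.C j).Nonempty := by
        apply Finset.card_pos.mp
        rcases hφ.1 j with h | h <;> omega
      obtain ⟨⟨x, b⟩, hxb⟩ := hne
      have heo : (ResA.ev x b : ResA l) ∈ opts φ (.ucl j) := by
        simp only [opts, Finset.mem_insert]
        exact Or.inr (Finset.mem_image.mpr ⟨(x, b), hxb, rfl⟩)
      have h := HS (.ucl j) _ heo
      set A := insert (PlA.uvar x)
        ((((Finset.univ.filter fun j' => (x, b) ∈ φ.C j')).erase j).image
          (PlA.ucl : Fin k → PlA l k)) with hA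
      have hAcard : A.card ≤ 2 := by
        have h1 : (((Finset.univ.filter fun j' => (x, b) ∈ φ.C j')).erase j).card ≤ 1 := by
          rw [Finset.card_erase_of_mem (Finset.mem_filter.mpr ⟨Finset.mem_univ j, hxb⟩)]
          have := hφ.2 x b
          omega
        calc A.card ≤ _ + 1 := Finset.card_insert_le _ _
          _ ≤ 1 + 1 := by gcongr; exact Finset.card_image_le.trans h1
      have hcov : ∀ (g : PlA l k → ResA l), (∀ v, g v ∈ opts φ v) →
          ∀ v, v ≠ .ucl j → g v = .ev x b → v ∈ A := by
        intro g hgo v hv hveq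
        rcases opts_ev φ (hveq ▸ hgo v) with rfl | ⟨j', rfl, hj'⟩
        · exact Finset.mem_insert_self _ _
        · refine Finset.mem_insert_of_mem (Finset.mem_image_of_mem _
            (Finset.mem_erase.mpr ⟨?_, Finset.mem_filter.mpr ⟨Finset.mem_univ _, hj'⟩⟩))
          exact fun hh => hv (by rw [hh])
      have c1 : (cntN s (.ucl j) (.ev x b) : ℝ) ≤ 2 := by
        exact_mod_cast (cntN_le A (hcov s hso)).trans hAcard
      have c2 : (cntN m (.ucl j) (.ev x b) : ℝ) ≤ 2 := by
        exact_mod_cast (cntN_le A (hcov m hmo)).trans hAcard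
      have sev : slope l p (.ev x b : ResA l) = 2 - p := rfl
      rw [sev] at h
      have hl2' : (2 : ℝ) ≤ (l : ℝ) := by exact_mod_cast hl2
      have e1 : (1 - p) * (cntN s (.ucl j) (.ev x b) : ℝ) ≤ (1 - p) * 2 :=
        mul_le_mul_of_nonneg_left c1 h1p
      have e2 : p * (cntN m (.ucl j) (.ev x b) : ℝ) ≤ p * 2 :=
        mul_le_mul_of_nonneg_left c2 hp0.le
      have hX : (1 - p) * (cntN s (.ucl j) (.ev x b) : ℝ)
          + p * (cntN m (.ucl j) (.ev x b) : ℝ) + 1 ≤ 3 := by linarith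
      have hR : (2 - p) * ((1 - p) * (cntN s (.ucl j) (.ev x b) : ℝ)
          + p * (cntN m (.ucl j) (.ev x b) : ℝ) + 1) ≤ (2 - p) * 3 :=
        mul_le_mul_of_nonneg_left hX (by linarith)
      linarith
    · -- l = 1
      have hl1 : l = 1 := by omega
      subst hl1
      have huniv : ∀ j' : Fin k, φ.C j' = (Finset.univ : Finset (Fin 1 × Bool)) := by
        intro j'
        apply Finset.eq_univ_of_card
        have h2 := hφ.1 j'
        have hle := Finset.card_le_univ (φ.C j')
        have hu2 : Fintype.card (Fin 1 × Bool) = 2 := by simp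
        omega
      set x : Fin 1 := ⟨0, Nat.one_pos⟩ with hxdef
      have hk2 : k ≤ 2 := by
        have hkk := hφ.2 x true
        have hfil : (Finset.univ.filter fun j' => (x, true) ∈ φ.C j')
            = (Finset.univ : Finset (Fin k)) := by
          apply Finset.filter_true_of_mem
          intro j' _
          rw [huniv j']
          exact Finset.mem_univ _
        rwa [hfil, Finset.card_univ, Fintype.card_fin] at hkk
      set A := insert (PlA.uvar x)
        (((Finset.univ : Finset (Fin k)).erase j).image (PlA.ucl : Fin k → PlA 1 k)) with hA
      have hAcard : A.card ≤ 2 := by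
        have h1 : ((Finset.univ : Finset (Fin k)).erase j).card ≤ 1 := by
          rw [Finset.card_erase_of_mem (Finset.mem_univ j), Finset.card_univ, Fintype.card_fin]
          omega
        calc A.card ≤ _ + 1 := Finset.card_insert_le _ _
          _ ≤ 1 + 1 := by gcongr; exact Finset.card_image_le.trans h1
      have hcov : ∀ (g : PlA 1 k → ResA 1), (∀ v, g v ∈ opts φ v) →
          ∀ v, v ≠ .ucl j → (g v = .ev x false ∨ g v = .ev x true) → v ∈ A := by
        intro g hgo v hv hveq
        have hva : ∃ b : Bool, g v = .ev x b := by
          rcases hveq with hveq | hveq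
          · exact ⟨false, hveq⟩
          · exact ⟨true, hveq⟩
        obtain ⟨b, hveq'⟩ := hva
        rcases opts_ev φ (hveq' ▸ hgo v) with rfl | ⟨j', rfl, hj'⟩
        · exact Finset.mem_insert_self _ _
        · refine Finset.mem_insert_of_mem (Finset.mem_image_of_mem _
            (Finset.mem_erase.mpr ⟨?_, Finset.mem_univ _⟩))
          exact fun hh => hv (by rw [hh])
      have hps := cntN_pair_le (g := s) (u := .ucl j) (by simp) A (hcov s hso)
      have hpm := cntN_pair_le (g := m) (u := .ucl j) (by simp) A (hcov m hmo)
      have hps' : (cntN s (.ucl j) (.ev x false) : ℝ) + (cntN s (.ucl j) (.ev x true) : ℝ) ≤ 2 := by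
        exact_mod_cast hps.trans hAcard
      have hpm' : (cntN m (.ucl j) (.ev x false) : ℝ) + (cntN m (.ucl j) (.ev x true) : ℝ) ≤ 2 := by
        exact_mod_cast hpm.trans hAcard
      have hmin : ∃ b : Bool, (1 - p) * (cntN s (.ucl j) (.ev x b) : ℝ)
          + p * (cntN m (.ucl j) (.ev x b) : ℝ) ≤ 1 := by
        by_contra hcon
        push_neg at hcon
        have hf := hcon false
        have ht := hcon true
        have n1 : (0:ℝ) ≤ (cntN s (.ucl j) (.ev x false) : ℝ) := by positivity
        have n2 : (0:ℝ) ≤ (cntN s (.ucl j) (.ev x true) : ℝ) := by positivity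
        have n3 : (0:ℝ) ≤ (cntN m (.ucl j) (.ev x false) : ℝ) := by positivity
        have q1 : (1 - p) * ((cntN s (.ucl j) (.ev x false) : ℝ)
            + (cntN s (.ucl j) (.ev x true) : ℝ)) ≤ (1 - p) * 2 :=
          mul_le_mul_of_nonneg_left hps' h1p
        have q2 : p * ((cntN m (.ucl j) (.ev x false) : ℝ)
            + (cntN m (.ucl j) (.ev x true) : ℝ)) ≤ p * 2 :=
          mul_le_mul_of_nonneg_left hpm' hp0.le
        linarith
      obtain ⟨b, hbb⟩ := hmin
      have heo : (ResA.ev x b : ResA 1) ∈ opts φ (.ucl j) := by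
        simp only [opts, Finset.mem_insert]
        refine Or.inr (Finset.mem_image.mpr ⟨(x, b), ?_, rfl⟩)
        rw [huniv j]
        exact Finset.mem_univ _
      have h := HS (.ucl j) _ heo
      have sev : slope 1 p (.ev x b : ResA 1) = 2 - p := rfl
      rw [sev] at h
      push_cast at hlb
      have hXX : (2 - p) * ((1 - p) * (cntN s (.ucl j) (.ev x b) : ℝ)
          + p * (cntN m (.ucl j) (.ev x b) : ℝ) + 1) ≤ (2 - p) * 2 :=
        mul_le_mul_of_nonneg_left (by linarith) (by linarith)
      linarith
  -- Step A4
  have hA : ∀ u, s u = .e0 ↔ u = .u0 := by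
    intro u
    constructor
    · intro hsu
      cases u with
      | u0 => rfl
      | u1 => exfalso; have := hso .u1; rw [hsu] at this; simp [opts] at this
      | u2 => exact absurd hsu hA1
      | uvar x => exact absurd hsu (hA2 x)
      | ucl j => exact absurd hsu (hA3 j)
    · rintro rfl; exact hs0
  have hcnt_e0 : ∀ u, u ≠ .u0 → cntN s u .e0 = 1 := by
    intro u hu
    refine Nat.le_antisymm ?_ (one_le_cntN .u0 (Ne.symm hu) hs0)
    have := cntN_le (g := s) (u := u) (e := .e0) ({.u0} : Finset (PlA l k))
      (fun v _ hveq => Finset.mem_singleton.mpr ((hA v).mp hveq))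
    simpa using this
  -- value of e0 for malicious agents
  have HV : ∀ u : PlA l k, u ≠ .u0 → u ≠ .u1 →
      ((l : ℝ) + 1) ≤ slope l p (m u) * (cntN s u (m u) : ℝ) := by
    intro u hu0 hu1
    have he0 : (.e0 : ResA l) ∈ opts φ u := by
      cases u with
      | u0 => exact absurd rfl hu0
      | u1 => exact absurd rfl hu1
      | u2 => simp [opts]
      | uvar x => simp [opts]
      | ucl j => simp [opts]
    have h := HM u .e0 he0
    rw [hcnt_e0 u hu0, se0] at h
    simpa using h
  -- Step B : u2's malicious agent is on e0
  have hB : m .u2 = .e0 := by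
    have h123 : ∀ e : ResA l, (e = .e1 ∨ e = .e2 ∨ e = .e3) → m .u2 ≠ e := by
      intro e he123 hme
      have hv := HV .u2 (by simp) (by simp)
      rw [hme, slope_e123 he123] at hv
      have hcle : cntN s .u2 e ≤ 1 := by
        have := cntN_le (g := s) (u := .u2) (e := e) ({.u1} : Finset (PlA l k))
          (fun v hv' hveq => by
          rcases opts_e123 φ he123 (hveq ▸ hso v) with rfl | rfl
          · exact Finset.mem_singleton_self _
          · exact absurd rfl hv')
        simpa using this
      have : (cntN s .u2 e : ℝ) ≤ 1 := by exact_mod_cast hcle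
      linarith
    have h4 : m .u2 ≠ .e4 := by
      intro hme
      have hv := HV .u2 (by simp) (by simp)
      rw [hme, se4] at hv
      have : (cntN s .u2 .e4 : ℝ) ≤ (l : ℝ) := by exact_mod_cast cnt_e4_le_u2 φ s hso
      linarith
    have hopt := hmo .u2
    simp only [opts, Finset.mem_insert, Finset.mem_singleton] at hopt
    rcases hopt with h | h | h | h | h
    · exact h
    · exact absurd h (h123 _ (Or.inl rfl))
    · exact absurd h (h123 _ (Or.inr (Or.inl rfl)))
    · exact absurd h (h123 _ (Or.inr (Or.inr rfl)))
    · exact absurd h h4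
  -- Step B' : variable players' malicious agents are not on e4
  have hB' : ∀ x, m (.uvar x) ≠ .e4 := by
    intro x hme
    have hv := HV (.uvar x) (by simp) (by simp)
    rw [hme, se4] at hv
    have : (cntN s (.uvar x) .e4 : ℝ) ≤ (l : ℝ) := by
      exact_mod_cast cnt_e4_le_var hl φ s hso x
    linarith
  
  -- Step 7 : no malicious agent sits on a literal resource
  have hNL : ∀ (u : PlA l k) (y : Fin l) (b : Bool), m u ≠ .ev y b := by
    intro u y b hme
    have hu0 : u ≠ .u0 := by rintro rfl; rw [hm0] at hme; exact absurd hme (by simp)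
    have hu1 : u ≠ .u1 := by
      rintro rfl
      have := hmo .u1
      rw [hme] at this
      simp [opts] at this
    have sev : slope l p (.ev y b : ResA l) = 2 - p := rfl
    have h70 : ((l : ℝ) + 1) ≤ (2 - p) * (cntN s u (.ev y b) : ℝ) := by
      have := HV u hu0 hu1
      rwa [hme, sev] at this
    set Cl : Finset (Fin k) := Finset.univ.filter (fun j => (y, b) ∈ φ.C j) with hCldef
    have hCl2 : Cl.card ≤ 2 := hφ.2 y b
    have hcovgen : ∀ (g : PlA l k → ResA l), (∀ v, g v ∈ opts φ v) →
        ∀ v, g v = .ev y b → v = .uvar y ∨ ∃ j, v = .ucl j ∧ j ∈ Cl := by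
      intro g hgo v hveq
      rcases opts_ev φ (hveq ▸ hgo v) with rfl | ⟨j, rfl, hj⟩
      · exact Or.inl rfl
      · exact Or.inr ⟨j, rfl, Finset.mem_filter.mpr ⟨Finset.mem_univ _, hj⟩⟩
    have hcnt2 : 2 ≤ cntN s u (.ev y b) := by
      by_contra hcon
      push_neg at hcon
      have h1 : cntN s u (.ev y b) ≤ 1 := by omega
      have h1' : (cntN s u (.ev y b) : ℝ) ≤ 1 := by exact_mod_cast h1
      have := mul_le_mul_of_nonneg_left h1' (by linarith : (0 : ℝ) ≤ 2 - p)
      linarith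
    have hlle2 : l ≤ 2 := by
      have hCovmem : u ∈ insert (.uvar y : PlA l k) (Cl.image PlA.ucl) := by
        rcases opts_ev φ (hme ▸ hmo u) with rfl | ⟨j, rfl, hj⟩
        · exact Finset.mem_insert_self _ _
        · exact Finset.mem_insert_of_mem (Finset.mem_image_of_mem _
            (Finset.mem_filter.mpr ⟨Finset.mem_univ _, hj⟩))
      have hcntle : cntN s u (.ev y b) ≤ 2 := by
        have hsub := cntN_le (g := s) (u := u) (e := .ev y b)
          ((insert (.uvar y : PlA l k) (Cl.image PlA.ucl)).erase u)
          (fun v hv hveq => Finset.mem_erase.mpr ⟨hv, by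
            rcases hcovgen s hso v hveq with rfl | ⟨j, rfl, hj⟩
            · exact Finset.mem_insert_self _ _
            · exact Finset.mem_insert_of_mem (Finset.mem_image_of_mem _ hj)⟩)
        have hc3 : (insert (.uvar y : PlA l k) (Cl.image PlA.ucl)).card ≤ 3 := by
          calc _ ≤ _ + 1 := Finset.card_insert_le _ _
            _ ≤ 2 + 1 := by gcongr; exact Finset.card_image_le.trans hCl2
        have := Finset.card_erase_of_mem hCovmem
        omega
      have hc : (cntN s u (.ev y b) : ℝ) ≤ 2 := by exact_mod_cast hcntle
      have := mul_le_mul_of_nonneg_left hc (by linarith : (0 : ℝ) ≤ 2 - p)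
      have hl3 : (l : ℝ) < 3 := by linarith
      have : l < 3 := by exact_mod_cast hl3
      omega
    have hl2' : (l : ℝ) ≤ 2 := by exact_mod_cast hlle2
    by_cases hsy : s (.uvar y) = .ev y b
    · -- Case 7.1 : u_y's selfish agent is on the literal resource; it deviates to e4
      have heo4 : (.e4 : ResA l) ∈ opts φ (.uvar y) := by simp [opts]
      have h := HS (.uvar y) .e4 heo4
      rw [hsy, sev, se4] at h
      have hcm4 : cntN m (.uvar y) .e4 = 0 := cntN_eq_zero (fun v hv hveq => by
        rcases opts_e4 φ (hveq ▸ hmo v) with rfl | ⟨x', rfl⟩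
        · rw [hB] at hveq; exact absurd hveq (by simp)
        · exact hB' x' hveq)
      have hcs4 : (cntN s (.uvar y) .e4 : ℝ) ≤ (l : ℝ) := by
        exact_mod_cast cnt_e4_le_var hl φ s hso y
      rw [hcm4] at h
      push_cast at h
      have hb4 : (1 - p) * (cntN s (.uvar y) .e4 : ℝ) ≤ (1 - p) * (l : ℝ) :=
        mul_le_mul_of_nonneg_left hcs4 h1p
      by_cases huy : u = .uvar y
      · -- two clause players share the resource with u_y's selfish agent
        have hcs : (2 : ℝ) ≤ (cntN s (.uvar y) (.ev y b) : ℝ) := by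
          exact_mod_cast (huy ▸ hcnt2)
        have hcm0 : (0 : ℝ) ≤ (cntN m (.uvar y) (.ev y b) : ℝ) := by positivity
        have e1 : (1 - p) * 2 ≤ (1 - p) * (cntN s (.uvar y) (.ev y b) : ℝ) :=
          mul_le_mul_of_nonneg_left hcs h1p
        have hX : (3 - 2 * p : ℝ) ≤ (1 - p) * (cntN s (.uvar y) (.ev y b) : ℝ)
            + p * (cntN m (.uvar y) (.ev y b) : ℝ) + 1 := by
          nlinarith [mul_nonneg hp0.le hcm0]
        have hL := mul_le_mul_of_nonneg_left hX (by linarith : (0 : ℝ) ≤ 2 - p)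
        have hb5 : (1 - p) * (l : ℝ) ≤ (1 - p) * 2 := mul_le_mul_of_nonneg_left hl2' h1p
        nlinarith [mul_pos (show (0:ℝ) < 1 - p by linarith) (show (0:ℝ) < 3 - 2*p by linarith)]
      · -- u is a clause player whose malicious agent is on the resource
        have hcs1 : 1 ≤ cntN s (.uvar y) (.ev y b) := by
          have := cntN_le_cntN_add_one (g := s) (u := u) (w := .uvar y) (e := .ev y b)
          omega
        have hcm1 : 1 ≤ cntN m (.uvar y) (.ev y b) := one_le_cntN u huy hme
        have hcs1' : (1 : ℝ) ≤ (cntN s (.uvar y) (.ev y b) : ℝ) := by exact_mod_cast hcs1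
        have hcm1' : (1 : ℝ) ≤ (cntN m (.uvar y) (.ev y b) : ℝ) := by exact_mod_cast hcm1
        have e1 : (1 - p) * 1 ≤ (1 - p) * (cntN s (.uvar y) (.ev y b) : ℝ) :=
          mul_le_mul_of_nonneg_left hcs1' h1p
        have e2 : p * 1 ≤ p * (cntN m (.uvar y) (.ev y b) : ℝ) :=
          mul_le_mul_of_nonneg_left hcm1' hp0.le
        have hX : (2 : ℝ) ≤ (1 - p) * (cntN s (.uvar y) (.ev y b) : ℝ)
            + p * (cntN m (.uvar y) (.ev y b) : ℝ) + 1 := by linarith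
        have hL := mul_le_mul_of_nonneg_left hX (by linarith : (0 : ℝ) ≤ 2 - p)
        have hb5 : (1 - p) * (l : ℝ) ≤ (1 - p) * 2 := mul_le_mul_of_nonneg_left hl2' h1p
        linarith
    · -- Case 7.2 : s (uvar y) ≠ ev y b ; then u = uvar y and two clauses sit on the resource
      have huy : u = .uvar y := by
        rcases opts_ev φ (hme ▸ hmo u) with h' | ⟨c, rfl, hc⟩
        · exact h'
        · exfalso
          have hle1 : cntN s (.ucl c) (.ev y b) ≤ 1 := by
            have hsub := cntN_le (g := s) (u := .ucl c) (e := .ev y b)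
              ((Cl.erase c).image PlA.ucl)
              (fun v hv hveq => by
                rcases hcovgen s hso v hveq with rfl | ⟨j, rfl, hj⟩
                · exact absurd hveq hsy
                · exact Finset.mem_image_of_mem _
                    (Finset.mem_erase.mpr ⟨fun hh => hv (by rw [hh]), hj⟩))
            have hcCl : c ∈ Cl := Finset.mem_filter.mpr ⟨Finset.mem_univ _, hc⟩
            have hcc : ((Cl.erase c).image (PlA.ucl : Fin k → PlA l k)).card ≤ 1 := by
              refine Finset.card_image_le.trans ?_
              rw [Finset.card_erase_of_mem hcCl]
              omega
            omega
          omega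
      subst huy
      -- extract the two clauses selfishly on the resource
      have hFcard : 2 ≤ ((Finset.univ.erase (.uvar y : PlA l k)).filter
          (fun v => s v = .ev y b)).card := hcnt2
      have hFlt : 1 < ((Finset.univ.erase (.uvar y : PlA l k)).filter
          (fun v => s v = .ev y b)).card := by omega
      obtain ⟨v1, hv1, v2, hv2, hv12⟩ := Finset.one_lt_card.mp hFlt
      have hv1e : s v1 = .ev y b := (Finset.mem_filter.mp hv1).2
      have hv2e : s v2 = .ev y b := (Finset.mem_filter.mp hv2).2
      have hv1y : v1 ≠ .uvar y := (Finset.mem_erase.mp (Finset.mem_filter.mp hv1).1).1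
      have hv2y : v2 ≠ .uvar y := (Finset.mem_erase.mp (Finset.mem_filter.mp hv2).1).1
      obtain ⟨c1, rfl, hc1Cl⟩ : ∃ c, v1 = .ucl c ∧ c ∈ Cl := by
        rcases hcovgen s hso v1 hv1e with rfl | ⟨j, rfl, hj⟩
        · exact absurd rfl hv1y
        · exact ⟨j, rfl, hj⟩
      obtain ⟨c2, rfl, hc2Cl⟩ : ∃ c, v2 = .ucl c ∧ c ∈ Cl := by
        rcases hcovgen s hso v2 hv2e with rfl | ⟨j, rfl, hj⟩
        · exact absurd rfl hv2y
        · exact ⟨j, rfl, hj⟩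
      have hc12 : c1 ≠ c2 := by
        intro hh
        exact hv12 (by rw [hh])
      have hCleq : Cl = {c1, c2} := by
        refine (Finset.eq_of_subset_of_card_le ?_ ?_).symm
        · intro j hj
          rcases Finset.mem_insert.mp hj with rfl | hj'
          · exact hc1Cl
          · exact (Finset.mem_singleton.mp hj') ▸ hc2Cl
        · rw [Finset.card_insert_of_notMem (by simpa using hc12), Finset.card_singleton]
          exact hCl2
      -- no clause's malicious agent is on the resource
      have hMcl : ∀ d, m (.ucl d) ≠ .ev y b := by
        intro d hd
        have hdCl : d ∈ Cl := by
          rcases opts_ev φ (hd ▸ hmo (.ucl d)) with h' | ⟨j, hj, hj'⟩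
          · exact absurd h' (by simp)
          · have : j = d := by injection hj.symm
            exact Finset.mem_filter.mpr ⟨Finset.mem_univ _, this ▸ hj'⟩
        have hv := HV (.ucl d) (by simp) (by simp)
        rw [hd, sev] at hv
        have hle1 : cntN s (.ucl d) (.ev y b) ≤ 1 := by
          have hsub := cntN_le (g := s) (u := .ucl d) (e := .ev y b)
            ((Cl.erase d).image PlA.ucl)
            (fun v hv' hveq => by
              rcases hcovgen s hso v hveq with rfl | ⟨j, rfl, hj⟩
              · exact absurd hveq hsy
              · exact Finset.mem_image_of_mem _
                  (Finset.mem_erase.mpr ⟨fun hh => hv' (by rw [hh]), hj⟩))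
          have hcc : ((Cl.erase d).image (PlA.ucl : Fin k → PlA l k)).card ≤ 1 := by
            refine Finset.card_image_le.trans ?_
            rw [Finset.card_erase_of_mem hdCl]
            omega
          omega
        have h1' : (cntN s (.ucl d) (.ev y b) : ℝ) ≤ 1 := by exact_mod_cast hle1
        have := mul_le_mul_of_nonneg_left h1' (by linarith : (0 : ℝ) ≤ 2 - p)
        linarith
      -- exact counts for c1's cost on the resource
      have hucl12 : (.ucl c2 : PlA l k) ≠ .ucl c1 := by
        simp only [ne_eq, PlA.ucl.injEq]
        exact fun hh => hc12 hh.symm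
      have hcs_c1 : cntN s (.ucl c1) (.ev y b) = 1 := by
        refine Nat.le_antisymm ?_ (one_le_cntN (.ucl c2) hucl12 hv2e)
        have hsub := cntN_le (g := s) (u := .ucl c1) (e := .ev y b)
          ({.ucl c2} : Finset (PlA l k))
          (fun v hv' hveq => by
            rcases hcovgen s hso v hveq with rfl | ⟨j, rfl, hj⟩
            · exact absurd hveq hsy
            · rw [hCleq] at hj
              rcases Finset.mem_insert.mp hj with rfl | hj'
              · exact absurd rfl hv'
              · rw [Finset.mem_singleton.mp hj']
                exact Finset.mem_singleton_self _)
        simpa using hsub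
      have hcm_c1 : cntN m (.ucl c1) (.ev y b) = 1 := by
        refine Nat.le_antisymm ?_ (one_le_cntN (.uvar y) (by simp) hme)
        have hsub := cntN_le (g := m) (u := .ucl c1) (e := .ev y b)
          ({.uvar y} : Finset (PlA l k))
          (fun v hv' hveq => by
            rcases hcovgen m hmo v hveq with rfl | ⟨j, rfl, hj⟩
            · exact Finset.mem_singleton_self _
            · exact absurd hveq (hMcl j))
        simpa using hsub
      -- pick another literal of c1
      have hc1C : (y, b) ∈ φ.C c1 := (Finset.mem_filter.mp hc1Cl).2
      have hcard1 : 1 < (φ.C c1).card := by rcases hφ.1 c1 with h | h <;> omega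
      obtain ⟨⟨z, a⟩, hza, hzane⟩ := Finset.exists_mem_ne hcard1 (y, b)
      have he'e : (.ev z a : ResA l) ≠ .ev y b := by
        simp only [ne_eq, ResA.ev.injEq, not_and]
        intro h1 h2
        exact hzane (by rw [h1, h2])
      have he'o : (.ev z a : ResA l) ∈ opts φ (.ucl c1) := by
        simp only [opts, Finset.mem_insert]
        exact Or.inr (Finset.mem_image.mpr ⟨(z, a), hza, rfl⟩)
      have sev' : slope l p (.ev z a : ResA l) = 2 - p := rfl
      have hHS1 := HS (.ucl c1) (.ev z a) he'o
      rw [hv1e, sev, sev', hcs_c1, hcm_c1] at hHS1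
      push_cast at hHS1
      set Clz : Finset (Fin k) := Finset.univ.filter (fun j => (z, a) ∈ φ.C j) with hClzdef
      have hClz2 : Clz.card ≤ 2 := hφ.2 z a
      have hc1z : c1 ∈ Clz := Finset.mem_filter.mpr ⟨Finset.mem_univ _, hza⟩
      have hcovz : ∀ (g : PlA l k → ResA l), (∀ v, g v ∈ opts φ v) →
          ∀ v, g v = .ev z a → v = .uvar z ∨ ∃ j, v = .ucl j ∧ j ∈ Clz := by
        intro g hgo v hveq
        rcases opts_ev φ (hveq ▸ hgo v) with rfl | ⟨j, rfl, hj⟩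
        · exact Or.inl rfl
        · exact Or.inr ⟨j, rfl, Finset.mem_filter.mpr ⟨Finset.mem_univ _, hj⟩⟩
      -- no malicious agent on the alternative resource (as seen by c1)
      have hMz : cntN m (.ucl c1) (.ev z a) = 0 := by
        apply cntN_eq_zero
        intro v hv' hveq
        rcases hcovz m hmo v hveq with rfl | ⟨d, rfl, hdz⟩
        · -- uvar z's malicious agent on ev z a : impossible
          have hvv := HV (.uvar z) (by simp) (by simp)
          rw [hveq, sev'] at hvv
          have hle1 : cntN s (.uvar z) (.ev z a) ≤ 1 := by
            have hsub := cntN_le (g := s) (u := .uvar z) (e := .ev z a)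
              ((Clz.erase c1).image PlA.ucl)
              (fun w hw hweq => by
                rcases hcovz s hso w hweq with rfl | ⟨j, rfl, hj⟩
                · exact absurd rfl hw
                · refine Finset.mem_image_of_mem _ (Finset.mem_erase.mpr ⟨?_, hj⟩)
                  rintro rfl
                  exact he'e (hweq.symm.trans hv1e))
            have hcc : ((Clz.erase c1).image (PlA.ucl : Fin k → PlA l k)).card ≤ 1 := by
              refine Finset.card_image_le.trans ?_
              rw [Finset.card_erase_of_mem hc1z]
              omega
            omega
          have h1' : (cntN s (.uvar z) (.ev z a) : ℝ) ≤ 1 := by exact_mod_cast hle1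
          have := mul_le_mul_of_nonneg_left h1' (by linarith : (0 : ℝ) ≤ 2 - p)
          linarith
        · -- clause d's malicious agent on ev z a : impossible
          have hdne : d ≠ c1 := fun hh => hv' (by rw [hh])
          have hvv := HV (.ucl d) (by simp) (by simp)
          rw [hveq, sev'] at hvv
          have hClzeq : Clz = {c1, d} := by
            refine (Finset.eq_of_subset_of_card_le ?_ ?_).symm
            · intro j hj
              rcases Finset.mem_insert.mp hj with rfl | hj'
              · exact hc1z
              · exact (Finset.mem_singleton.mp hj') ▸ hdz
            · rw [Finset.card_insert_of_notMem (by simpa using fun hh => hdne hh.symm),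
                Finset.card_singleton]
              exact hClz2
          have hle1 : cntN s (.ucl d) (.ev z a) ≤ 1 := by
            have hsub := cntN_le (g := s) (u := .ucl d) (e := .ev z a)
              ({.uvar z} : Finset (PlA l k))
              (fun w hw hweq => by
                rcases hcovz s hso w hweq with rfl | ⟨j, rfl, hj⟩
                · exact Finset.mem_singleton_self _
                · exfalso
                  rw [hClzeq] at hj
                  rcases Finset.mem_insert.mp hj with rfl | hj'
                  · exact he'e (hweq.symm.trans hv1e)
                  · exact hw (by rw [Finset.mem_singleton.mp hj']))
            simpa using hsub
          have h1' : (cntN s (.ucl d) (.ev z a) : ℝ) ≤ 1 := by exact_mod_cast hle1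
          have := mul_le_mul_of_nonneg_left h1' (by linarith : (0 : ℝ) ≤ 2 - p)
          linarith
      -- hence at least two selfish agents on ev z a
      have hcs'2 : 2 ≤ cntN s (.ucl c1) (.ev z a) := by
        by_contra hcon
        push_neg at hcon
        have h1 : cntN s (.ucl c1) (.ev z a) ≤ 1 := by omega
        have h1' : (cntN s (.ucl c1) (.ev z a) : ℝ) ≤ 1 := by exact_mod_cast h1
        rw [hMz] at hHS1
        push_cast at hHS1
        have hb1 : (1 - p) * (cntN s (.ucl c1) (.ev z a) : ℝ) ≤ (1 - p) * 1 :=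
          mul_le_mul_of_nonneg_left h1' h1p
        have hXb : (1 - p) * (cntN s (.ucl c1) (.ev z a) : ℝ) + p * 0 + 1 ≤ 2 - p := by
          linarith
        have hR := mul_le_mul_of_nonneg_left hXb (show (0:ℝ) ≤ 2 - p by linarith)
        have hpp : (0:ℝ) < p * (2 - p) := mul_pos hp0 (by linarith)
        linarith
      -- the two selfish agents must be uvar z and another clause
      have hF'sub : (Finset.univ.erase (.ucl c1 : PlA l k)).filter (fun v => s v = .ev z a)
          ⊆ insert (.uvar z : PlA l k) ((Clz.erase c1).image PlA.ucl) := by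
        intro v hvF
        simp only [Finset.mem_filter, Finset.mem_erase, Finset.mem_univ, and_true] at hvF
        rcases hcovz s hso v hvF.2 with rfl | ⟨j, rfl, hj⟩
        · exact Finset.mem_insert_self _ _
        · refine Finset.mem_insert_of_mem (Finset.mem_image_of_mem _
            (Finset.mem_erase.mpr ⟨fun hh => hvF.1 (by rw [hh]), hj⟩))
      have hCovZcard : (insert (.uvar z : PlA l k) ((Clz.erase c1).image PlA.ucl)).card ≤ 2 := by
        have hcc : ((Clz.erase c1).image (PlA.ucl : Fin k → PlA l k)).card ≤ 1 := by
          refine Finset.card_image_le.trans ?_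
          rw [Finset.card_erase_of_mem hc1z]
          omega
        calc _ ≤ _ + 1 := Finset.card_insert_le _ _
          _ ≤ 1 + 1 := by gcongr
      have hF'eq : (Finset.univ.erase (.ucl c1 : PlA l k)).filter (fun v => s v = .ev z a)
          = insert (.uvar z : PlA l k) ((Clz.erase c1).image PlA.ucl) :=
        Finset.eq_of_subset_of_card_le hF'sub (le_trans hCovZcard hcs'2)
      have hsz : s (.uvar z) = .ev z a := by
        have hmm : (.uvar z : PlA l k) ∈ (Finset.univ.erase (.ucl c1 : PlA l k)).filter
            (fun v => s v = .ev z a) := hF'eq ▸ Finset.mem_insert_self _ _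
        exact (Finset.mem_filter.mp hmm).2
      have hex : ∃ c'', (.ucl c'' : PlA l k) ≠ .uvar z ∧ s (.ucl c'') = .ev z a := by
        have hne : ((Clz.erase c1).image (PlA.ucl : Fin k → PlA l k)).Nonempty := by
          by_contra hcon
          rw [Finset.not_nonempty_iff_eq_empty] at hcon
          have h1 : (insert (.uvar z : PlA l k) ((Clz.erase c1).image PlA.ucl)).card ≤ 1 := by
            rw [hcon]
            simp
          have h2 := hcs'2
          have h3 : cntN s (.ucl c1) (.ev z a)
              = (insert (.uvar z : PlA l k) ((Clz.erase c1).image PlA.ucl)).card := by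
            rw [cntN, hF'eq]
          omega
        obtain ⟨w, hw⟩ := hne
        obtain ⟨c'', _, rfl⟩ := Finset.mem_image.mp hw
        have hmm : (.ucl c'' : PlA l k) ∈ (Finset.univ.erase (.ucl c1 : PlA l k)).filter
            (fun v => s v = .ev z a) := hF'eq ▸ Finset.mem_insert_of_mem hw
        exact ⟨c'', by simp, (Finset.mem_filter.mp hmm).2⟩
      obtain ⟨c'', hc''ne, hsc''⟩ := hex
      -- final contradiction : uvar z prefers e4
      have heo4 : (.e4 : ResA l) ∈ opts φ (.uvar z) := by simp [opts]
      have hF := HS (.uvar z) .e4 heo4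
      rw [hsz, sev', se4] at hF
      have hcsz1 : (1 : ℝ) ≤ (cntN s (.uvar z) (.ev z a) : ℝ) := by
        exact_mod_cast one_le_cntN (.ucl c'') hc''ne hsc''
      have hcmz0 : (0 : ℝ) ≤ (cntN m (.uvar z) (.ev z a) : ℝ) := by positivity
      have hcm4 : cntN m (.uvar z) .e4 = 0 := cntN_eq_zero (fun v hv hveq => by
        rcases opts_e4 φ (hveq ▸ hmo v) with rfl | ⟨x', rfl⟩
        · rw [hB] at hveq; exact absurd hveq (by simp)
        · exact hB' x' hveq)
      have hcs4 : (cntN s (.uvar z) .e4 : ℝ) ≤ (l : ℝ) := by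
        exact_mod_cast cnt_e4_le_var hl φ s hso z
      rw [hcm4] at hF
      push_cast at hF
      have hb4 : (1 - p) * (cntN s (.uvar z) .e4 : ℝ) ≤ (1 - p) * (l : ℝ) :=
        mul_le_mul_of_nonneg_left hcs4 h1p
      have hX2 : (2 - p : ℝ) ≤ (1 - p) * (cntN s (.uvar z) (.ev z a) : ℝ)
          + p * (cntN m (.uvar z) (.ev z a) : ℝ) + 1 := by
        nlinarith [mul_le_mul_of_nonneg_left hcsz1 h1p, mul_nonneg hp0.le hcmz0]
      have hL := mul_le_mul_of_nonneg_left hX2 (by linarith : (0 : ℝ) ≤ 2 - p)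
      have hsq : (0 : ℝ) < (1 - p) * (1 - p) :=
        mul_pos (by linarith) (by linarith)
      have hb5 : (1 - p) * (l : ℝ) ≤ (1 - p) * 2 := mul_le_mul_of_nonneg_left hl2' h1p
      nlinarith
  -- all malicious agents except u1's are on e0
  have hmAll : ∀ u : PlA l k, u ≠ .u1 → m u = .e0 := by
    intro u hu1
    cases u with
    | u0 => exact hm0
    | u1 => exact absurd rfl hu1
    | u2 => exact hB
    | uvar x =>
        have hopt := hmo (.uvar x)
        simp only [opts, Finset.mem_insert, Finset.mem_singleton] at hopt
        rcases hopt with h | h | h | h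
        · exact h
        · exact absurd h (hB' x)
        · exact absurd h (hNL _ x false)
        · exact absurd h (hNL _ x true)
    | ucl j =>
        have hopt := hmo (.ucl j)
        simp only [opts, Finset.mem_insert] at hopt
        rcases hopt with h | h
        · exact h
        · exfalso
          obtain ⟨lit, _, hh⟩ := Finset.mem_image.mp h
          exact hNL _ lit.1 lit.2 hh.symm
  -- Step C : u2's selfish agent is on e4
  have hC : s .u2 = .e4 := by
    have hnot123 : ∀ e : ResA l, (e = .e1 ∨ e = .e2 ∨ e = .e3) → s .u2 ≠ e := by
      intro e he123 hse
      have hmu1opt : m .u1 = .e1 ∨ m .u1 = .e2 ∨ m .u1 = .e3 := by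
        have := hmo .u1
        simpa [opts] using this
      have hmu1 : m .u1 = e := by
        by_contra hne
        have hv := HM .u1 e (by rcases he123 with rfl | rfl | rfl <;> simp [opts])
        rw [slope_e123 he123, slope_e123 hmu1opt] at hv
        have h1 : (1 : ℝ) ≤ (cntN s .u1 e : ℝ) := by
          exact_mod_cast one_le_cntN .u2 (by simp) hse
        have h0 : cntN s .u1 (m .u1) = 0 := cntN_eq_zero (fun v hv' hveq => by
          rcases opts_e123 φ hmu1opt (hveq ▸ hso v) with rfl | rfl
          · exact absurd rfl hv'
          · exact hne (hveq.symm.trans hse))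
        rw [h0] at hv
        push_cast at hv
        linarith
      obtain ⟨e2', he2123, hne1, hne2⟩ := pigeon3 (s .u1) e
      have h := HS .u2 e2' (by rcases he2123 with rfl | rfl | rfl <;> simp [opts])
      rw [hse, slope_e123 he123, slope_e123 he2123] at h
      have z1 : cntN s .u2 e2' = 0 := cntN_eq_zero (fun v hv' hveq => by
        rcases opts_e123 φ he2123 (hveq ▸ hso v) with rfl | rfl
        · exact hne1 hveq.symm
        · exact hv' rfl)
      have z2 : cntN m .u2 e2' = 0 := cntN_eq_zero (fun v hv' hveq => by
        rcases opts_e123 φ he2123 (hveq ▸ hmo v) with rfl | rfl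
        · exact hne2 (hveq.symm.trans hmu1)
        · exact hv' rfl)
      have hcm1 : (1 : ℝ) ≤ (cntN m .u2 e : ℝ) := by
        exact_mod_cast one_le_cntN .u1 (by simp) hmu1
      have hcs0 : (0 : ℝ) ≤ (cntN s .u2 e : ℝ) := by positivity
      rw [z1, z2] at h
      push_cast at h
      nlinarith [mul_le_mul_of_nonneg_left hcm1 hp0.le, mul_nonneg h1p hcs0]
    have hopt := hso .u2
    simp only [opts, Finset.mem_insert, Finset.mem_singleton] at hopt
    rcases hopt with h | h | h | h | h
    · exact absurd h hA1
    · exact absurd h (hnot123 _ (Or.inl rfl))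
    · exact absurd h (hnot123 _ (Or.inr (Or.inl rfl)))
    · exact absurd h (hnot123 _ (Or.inr (Or.inr rfl)))
    · exact h
  -- Step D : no variable player's selfish agent on e4
  have hD : ∀ x, s (.uvar x) ≠ .e4 := by
    intro x hsx
    obtain ⟨e, he123, hne1, hne2⟩ := pigeon3 (s .u1) (m .u1)
    have h := HS .u2 e (by rcases he123 with rfl | rfl | rfl <;> simp [opts])
    rw [hC, se4, slope_e123 he123] at h
    have z1 : cntN s .u2 e = 0 := cntN_eq_zero (fun v hv' hveq => by
      rcases opts_e123 φ he123 (hveq ▸ hso v) with rfl | rfl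
      · exact hne1 hveq.symm
      · exact hv' rfl)
    have z2 : cntN m .u2 e = 0 := cntN_eq_zero (fun v hv' hveq => by
      rcases opts_e123 φ he123 (hveq ▸ hmo v) with rfl | rfl
      · exact hne2 hveq.symm
      · exact hv' rfl)
    have hcs1 : (1 : ℝ) ≤ (cntN s .u2 .e4 : ℝ) := by
      exact_mod_cast one_le_cntN (.uvar x) (by simp) hsx
    have hcm0 : (0 : ℝ) ≤ (cntN m .u2 .e4 : ℝ) := by positivity
    rw [z1, z2] at h
    push_cast at h
    nlinarith [mul_le_mul_of_nonneg_left hcs1 h1p, mul_nonneg hp0.le hcm0]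
  exact ⟨hmAll, hA, hC, hD⟩

end GAaux

theorem gammaA_pure_BNE_structure
    {l k : ℕ} (hl : 1 ≤ l) (hk : 1 ≤ k) (φ : Formula l k) (hφ : φ.Restricted)
    (p : ℝ) (hp0 : 0 < p) (hp1 : p < 1)
    (σ : Game.Profile (PlA l k) (ResA l)) (hσ : (GammaA φ p).IsPureBNE σ) :
    -- (I) all malicious type-agents except that of `u1` are assigned to `e0`,
    --     and `u0` is the only player whose selfish type-agent is assigned to `e0`
    ((∀ u : PlA l k, u ≠ PlA.u1 → (σ u).2 = {ResA.e0}) ∧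
      (∀ u : PlA l k, (σ u).1 = {ResA.e0} ↔ u = PlA.u0)) ∧
    -- (II) the selfish type-agent of `u2` is assigned to `e4` and no other
    --      type-agent is assigned to `e4`
    ((σ PlA.u2).1 = {ResA.e4} ∧
      (∀ u : PlA l k, u ≠ PlA.u2 → (σ u).1 ≠ {ResA.e4}) ∧
      (∀ u : PlA l k, (σ u).2 ≠ {ResA.e4})) := by
  classical
  have hs' : ∀ u, ∃ e, e ∈ GAaux.opts φ u ∧ (σ u).1 = {e} := by
    intro u
    obtain ⟨e, he, ht⟩ := (GAaux.mem_S_iff φ p u _).mp (hσ.1 u).1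
    exact ⟨e, he, ht⟩
  choose s hso hs using hs'
  have hm' : ∀ u, ∃ e, e ∈ GAaux.opts φ u ∧ (σ u).2 = {e} := by
    intro u
    obtain ⟨e, he, ht⟩ := (GAaux.mem_S_iff φ p u _).mp (hσ.1 u).2
    exact ⟨e, he, ht⟩
  choose m hmo hm using hm'
  have HS := fun u e he => GAaux.derive_HS φ p σ hσ s m hs hm u e he
  have HM := fun u e he => GAaux.derive_HM φ p hp0 hp1 σ hσ s m hs hm u e he
  obtain ⟨hmAll, hA, hC, hD⟩ := GAaux.structure_main hl φ hφ p hp0 hp1 s m hso hmo HS HM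
  have hs0 : s .u0 = .e0 := by
    have := hso .u0
    simpa [GAaux.opts] using this
  refine ⟨⟨?_, ?_⟩, ?_, ?_, ?_⟩
  · intro u hu
    rw [hm u, hmAll u hu]
  · intro u
    rw [hs u]
    constructor
    · intro h
      exact (hA u).mp (Finset.singleton_injective h)
    · intro h
      rw [(hA u).mpr h]
  · rw [hs .u2, hC]
  · intro u hu
    rw [hs u]
    intro h
    have hse : s u = .e4 := Finset.singleton_injective h
    cases u with
    | u0 => rw [hs0] at hse; simp at hse
    | u1 => have := hso .u1; rw [hse] at this; simp [GAaux.opts] at this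
    | u2 => exact hu rfl
    | uvar x => exact hD x hse
    | ucl j => have := hso (.ucl j); rw [hse] at this; simp [GAaux.opts] at this
  · intro u
    rw [hm u]
    intro h
    have hme : m u = .e4 := Finset.singleton_injective h
    by_cases hu1 : u = .u1
    · subst hu1
      have := hmo .u1
      rw [hme] at this
      simp [GAaux.opts] at this
    · rw [hmAll u hu1] at hme
      simp at hme
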